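/- arXiv:2002.00925 — 2 statements merged into one kernel-verified Lean document; each statement's English description precedes it below -/
import Mathlib

section
/- Let (X_v)_{v∈V} be a finite centered Gaussian field and (g_v)_{v∈V} independent random variables, independent of X, with P(g_v ≥ 1 + y) ≤ e^{−y²} for all y ≥ 0. Suppose there exist constants c̃, c > 0 such that for every finite subset Γ ⊆ V and every real s, P(max_{v∈Γ} X_v ≥ m + s) ≤ c̃ e^{−cs} |Γ|/|V|. Then there is a constant C > 0 such that for all ε ∈ (0,1) and all x ≥ −√ε, P(max_{v∈V}(X_v + ε g_v) ≥ m + x) ≤ P(max_{v∈V} X_v ≥ m + x − √ε) + c̃ e^{−cx} C e^{−1/(Cε)}. -/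
open MeasureTheory ProbabilityTheory

/-- A finite family `X` of random variables is a centered Gaussian field if every
linear combination is a centered Gaussian random variable. -/
def IsCenteredGaussianField {Ω : Type*} [MeasurableSpace Ω] (P : Measure Ω)
    {T : Type*} [Fintype T] (X : T → Ω → ℝ) : Prop :=
  ∀ c : T → ℝ, ∃ v : NNReal,
    P.map (fun ω => ∑ i, c i * X i ω) = gaussianReal 0 v

/-!
If `X_v + ε g_v ≥ m + x` but `X_v < m + x - √ε`, then `ε g_v` lies in a dyadic band
`[2^i √ε, 2^(i+1) √ε)`, which forces both `X_v ≥ m + x - 2^(i+1) √ε` and `g_v ≥ 2^i / √ε`.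
By independence, this has probability at most
`c̃ e^{-c(x - 2^(i+1) √ε)} e^{-(2^i/√ε - 1)²} / |V|`, and the Gaussian factor wins:
the product is `≤ c̃ e^{-cx} e^{1 + 8c²} e^{-1/(4ε)} e^{-i/8} / |V|`.
A union bound over `v` and a geometric series over `i` give the error term.
-/

theorem two_mul_mul_sub_sq_div_sub_one_le {c p s : ℝ} (hc : 0 ≤ c) (hp : 1 ≤ p) (hs0 : 0 < s)
    (hs1 : s ≤ 1) :
    2 * c * p * s - (p / s - 1) ^ 2 ≤ 1 + 8 * c ^ 2 - 1 / (4 * s ^ 2) - p ^ 2 / 8 := by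
  obtain ⟨u, rfl⟩ : ∃ u, s = u⁻¹ := ⟨s⁻¹, (inv_inv s).symm⟩
  have hu0 : 0 < u := inv_pos.1 hs0
  have hu : 1 ≤ u := (inv_le_one₀ hu0).1 hs1
  have hcps : 2 * c * p * u⁻¹ ≤ 2 * c * p := mul_le_of_le_one_right (by positivity) hs1
  have hsq : 1 / (4 * (u⁻¹) ^ 2) = u ^ 2 / 4 := by field_simp
  rw [div_inv_eq_mul, hsq]
  -- `2cp ≤ p²/8 + 8c²`, `(pu - 1)² ≥ (pu)²/2 - 1` and `(pu)²/2 ≥ (p² + u²)/4` for `p, u ≥ 1`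
  nlinarith [sq_nonneg (p - 8 * c), sq_nonneg (p * u - 2),
    mul_nonneg (sub_nonneg.2 (one_le_pow₀ hp : 1 ≤ p ^ 2)) (sub_nonneg.2 (one_le_pow₀ hu : 1 ≤ u ^ 2))]

theorem exp_mul_exp_dyadic_le {c x ε : ℝ} (hc : 0 ≤ c) (hε0 : 0 < ε) (hε1 : ε ≤ 1) (i : ℕ) :
    Real.exp (-c * (x - 2 ^ (i + 1) * Real.sqrt ε)) * Real.exp (-(2 ^ i / Real.sqrt ε - 1) ^ 2)
      ≤ Real.exp (-c * x) * Real.exp (1 + 8 * c ^ 2) * Real.exp (-1 / (4 * ε))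
        * Real.exp (-(1 / 8)) ^ i := by
  have hp : (1 : ℝ) ≤ 2 ^ i := one_le_pow₀ one_le_two
  have hip : (i : ℝ) ≤ (2 ^ i) ^ 2 := by
    have : (i : ℝ) ≤ 2 ^ i := by exact_mod_cast (Nat.lt_two_pow_self (n := i)).le
    nlinarith
  have key := two_mul_mul_sub_sq_div_sub_one_le hc hp (Real.sqrt_pos.2 hε0)
    (Real.sqrt_le_one.2 hε1)
  rw [Real.sq_sqrt hε0.le] at key
  rw [← Real.exp_nat_mul, ← Real.exp_add, ← Real.exp_add, ← Real.exp_add, ← Real.exp_add,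
    Real.exp_le_exp, pow_succ, neg_div]
  nlinarith

theorem sub_le_or_exists_dyadic {y a b ε : ℝ} (hε : 0 < ε) (h : y ≤ a + ε * b) :
    y - Real.sqrt ε ≤ a ∨
      ∃ i : ℕ, y - 2 ^ (i + 1) * Real.sqrt ε ≤ a ∧ 2 ^ i / Real.sqrt ε ≤ b := by
  have hss : Real.sqrt ε * Real.sqrt ε = ε := Real.mul_self_sqrt hε.le
  set s := Real.sqrt ε
  have hs : 0 < s := Real.sqrt_pos.2 hε
  rcases le_or_gt (ε * b) s with hb | hb
  · exact Or.inl (by linarith)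
  obtain ⟨i, hi, hi'⟩ := exists_nat_pow_near ((one_le_div hs).2 hb.le) one_lt_two
  have hεb : ε * b / s = b * s := by
    rw [div_eq_iff hs.ne', ← hss]; ring
  rw [hεb] at hi
  rw [div_lt_iff₀ hs] at hi'
  exact Or.inr ⟨i, by linarith, (div_le_iff₀ hs).2 hi⟩

theorem setOf_exists_le_add_subset_dyadic {Ω V : Type*} (X g : V → Ω → ℝ) {y ε : ℝ}
    (hε : 0 < ε) :
    {ω | ∃ v, y ≤ X v ω + ε * g v ω}
      ⊆ {ω | ∃ v, y - Real.sqrt ε ≤ X v ω} ∪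
        ⋃ v, ⋃ i : ℕ, {ω | y - 2 ^ (i + 1) * Real.sqrt ε ≤ X v ω}
          ∩ {ω | 2 ^ i / Real.sqrt ε ≤ g v ω} := by
  rintro ω ⟨v, hv⟩
  rcases sub_le_or_exists_dyadic hε hv with h | ⟨i, hX, hg⟩
  · exact Or.inl ⟨v, h⟩
  · exact Or.inr (Set.mem_iUnion₂.2 ⟨v, i, hX, hg⟩)

section

variable {Ω : Type*} [MeasurableSpace Ω] {μ : Measure Ω}

theorem ProbabilityTheory.IndepFun.measure_inter_le_ofReal_mul {Y Z : Ω → ℝ}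
    (h : IndepFun Y Z μ) {a b α β : ℝ} (hβ : 0 ≤ β)
    (hY : μ {ω | a ≤ Y ω} ≤ ENNReal.ofReal α) (hZ : μ {ω | b ≤ Z ω} ≤ ENNReal.ofReal β) :
    μ ({ω | a ≤ Y ω} ∩ {ω | b ≤ Z ω}) ≤ ENNReal.ofReal (α * β) :=
  calc μ ({ω | a ≤ Y ω} ∩ {ω | b ≤ Z ω})
      = μ {ω | a ≤ Y ω} * μ {ω | b ≤ Z ω} :=
        h.measure_inter_preimage_eq_mul _ _ measurableSet_Ici measurableSet_Ici
    _ ≤ ENNReal.ofReal α * ENNReal.ofReal β := mul_le_mul' hY hZ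
    _ = ENNReal.ofReal (α * β) := (ENNReal.ofReal_mul' hβ).symm

theorem ProbabilityTheory.IndepFun.measure_dyadic_le {Y Z : Ω → ℝ} (h : IndepFun Y Z μ)
    {κ c m x ε : ℝ} (hκ : 0 ≤ κ) (hc : 0 ≤ c) (hε0 : 0 < ε) (hε1 : ε ≤ 1)
    (hY : ∀ s, μ {ω | m + s ≤ Y ω} ≤ ENNReal.ofReal (κ * Real.exp (-c * s)))
    (hZ : ∀ y, 0 ≤ y → μ {ω | 1 + y ≤ Z ω} ≤ ENNReal.ofReal (Real.exp (-y ^ 2))) (i : ℕ) :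
    μ ({ω | m + x - 2 ^ (i + 1) * Real.sqrt ε ≤ Y ω} ∩ {ω | 2 ^ i / Real.sqrt ε ≤ Z ω})
      ≤ ENNReal.ofReal (κ * (Real.exp (-c * x) * Real.exp (1 + 8 * c ^ 2)
          * Real.exp (-1 / (4 * ε)) * Real.exp (-(1 / 8)) ^ i)) := by
  have hY' := hY (x - 2 ^ (i + 1) * Real.sqrt ε)
  rw [← add_sub_assoc] at hY'
  have hZ' := hZ (2 ^ i / Real.sqrt ε - 1) <| sub_nonneg.2 <| (one_le_div (Real.sqrt_pos.2 hε0)).2 <|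
    (Real.sqrt_le_one.2 hε1).trans (one_le_pow₀ one_le_two)
  rw [add_sub_cancel] at hZ'
  refine (h.measure_inter_le_ofReal_mul (Real.exp_pos _).le hY' hZ').trans
    (ENNReal.ofReal_le_ofReal ?_)
  rw [mul_assoc]
  gcongr κ * ?_
  exact exp_mul_exp_dyadic_le hc hε0 hε1 i

theorem measure_iUnion_iUnion_le_of_geometric {ι : Type*} [Fintype ι] (S : ι → ℕ → Set Ω)
    {a r : ℝ} (ha : 0 ≤ a) (hr0 : 0 ≤ r) (hr1 : r < 1)
    (h : ∀ v i, μ (S v i) ≤ ENNReal.ofReal (a / Fintype.card ι * r ^ i)) :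
    μ (⋃ v, ⋃ i, S v i) ≤ ENNReal.ofReal (a / (1 - r)) := by
  have hrow : ∀ v, ∑' i, μ (S v i) ≤ ENNReal.ofReal (a / Fintype.card ι / (1 - r)) := by
    intro v
    calc ∑' i, μ (S v i) ≤ ∑' i, ENNReal.ofReal (a / Fintype.card ι * r ^ i) :=
          ENNReal.tsum_le_tsum (h v)
      _ = ENNReal.ofReal (∑' i, a / Fintype.card ι * r ^ i) :=
          (ENNReal.ofReal_tsum_of_nonneg (fun i => by positivity)
            ((summable_geometric_of_lt_one hr0 hr1).mul_left _)).symm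
      _ = ENNReal.ofReal (a / Fintype.card ι / (1 - r)) := by
          rw [tsum_mul_left, tsum_geometric_of_lt_one hr0 hr1, div_eq_mul_inv _ (1 - r)]
  calc μ (⋃ v, ⋃ i, S v i) ≤ ∑' v, ∑' i, μ (S v i) :=
        (measure_iUnion_le _).trans (ENNReal.tsum_le_tsum fun v => measure_iUnion_le _)
    _ ≤ ∑' _ : ι, ENNReal.ofReal (a / Fintype.card ι / (1 - r)) := ENNReal.tsum_le_tsum hrow
    _ = ENNReal.ofReal (Fintype.card ι * (a / Fintype.card ι / (1 - r))) := by
        rw [tsum_fintype, Finset.sum_const, Finset.card_univ, nsmul_eq_mul,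
          ENNReal.ofReal_mul (Nat.cast_nonneg _), ENNReal.ofReal_natCast]
    _ ≤ ENNReal.ofReal (a / (1 - r)) := by
        refine ENNReal.ofReal_le_ofReal ?_
        rw [← mul_div_assoc]
        gcongr ?_ / _
        rcases eq_or_ne (Fintype.card ι : ℝ) 0 with h0 | h0
        · simp [h0, ha]
        · rw [mul_div_cancel₀ _ h0]

end

theorem mul_mul_exp_le_max {κ K ε : ℝ} (hκ : 0 ≤ κ) (hε : 0 < ε) :
    κ * K * Real.exp (-1 / (4 * ε)) ≤ κ * max 4 K * Real.exp (-1 / (max 4 K * ε)) := by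
  simp only [neg_div]
  gcongr
  · exact le_max_right _ _
  · exact le_max_left _ _

theorem stmt9_general {Ω : Type*} [MeasurableSpace Ω] (P : Measure Ω)
    {V : Type*} [Fintype V]
    (X g : V → Ω → ℝ) (m : ℝ)
    (hindep : IndepFun (fun ω => fun v => X v ω) (fun ω => fun v => g v ω) P)
    (hgtail : ∀ v, ∀ y : ℝ, 0 ≤ y → P {ω | 1 + y ≤ g v ω} ≤ ENNReal.ofReal (Real.exp (-y ^ 2)))
    (ctil c : ℝ) (hctil : 0 < ctil) (hc : 0 < c)
    (hmax : ∀ (Γ : Finset V) (s : ℝ),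
      P {ω | ∃ v ∈ Γ, m + s ≤ X v ω}
        ≤ ENNReal.ofReal (ctil * Real.exp (-c * s) * Γ.card / Fintype.card V)) :
    ∃ C : ℝ, 0 < C ∧ ∀ ε : ℝ, ε ∈ Set.Ioo (0:ℝ) 1 → ∀ x : ℝ, -Real.sqrt ε ≤ x →
      P {ω | ∃ v, m + x ≤ X v ω + ε * g v ω}
        ≤ P {ω | ∃ v, m + x - Real.sqrt ε ≤ X v ω}
          + ENNReal.ofReal (ctil * Real.exp (-c * x) * C * Real.exp (-1 / (C * ε))) := by
  set r := Real.exp (-(1 / 8)) with hr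
  have hr1 : r < 1 := Real.exp_lt_one_iff.2 (by norm_num)
  set K := Real.exp (1 + 8 * c ^ 2) / (1 - r) with hK
  refine ⟨max 4 K, by positivity, ?_⟩
  rintro ε ⟨hε0, hε1⟩ x -
  set E := Real.exp (-c * x) * Real.exp (1 + 8 * c ^ 2) * Real.exp (-1 / (4 * ε)) with hE
  have hXv : ∀ v s, P {ω | m + s ≤ X v ω}
      ≤ ENNReal.ofReal (ctil / Fintype.card V * Real.exp (-c * s)) := fun v s => by
    simpa [mul_div_right_comm] using hmax {v} s
  have hpiece : ∀ v i, P ({ω | m + x - 2 ^ (i + 1) * Real.sqrt ε ≤ X v ω}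
      ∩ {ω | 2 ^ i / Real.sqrt ε ≤ g v ω}) ≤ ENNReal.ofReal (ctil * E / Fintype.card V * r ^ i) := by
    intro v i
    refine ((hindep.comp (measurable_pi_apply v) (measurable_pi_apply v)).measure_dyadic_le
      (x := x) (by positivity) hc.le hε0 hε1.le (hXv v) (hgtail v) i).trans_eq
      (congrArg ENNReal.ofReal ?_)
    rw [hE, hr]; ring
  have hEK : ctil * E / (1 - r) = ctil * Real.exp (-c * x) * K * Real.exp (-1 / (4 * ε)) := by
    rw [hE, hK]; ring
  calc P {ω | ∃ v, m + x ≤ X v ω + ε * g v ω}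
      ≤ _ := (measure_mono (setOf_exists_le_add_subset_dyadic X g hε0)).trans (measure_union_le _ _)
    _ ≤ _ := by
      gcongr
      refine (measure_iUnion_iUnion_le_of_geometric _ (by positivity) (Real.exp_pos _).le hr1
        hpiece).trans (ENNReal.ofReal_le_ofReal ?_)
      rw [hEK]
      exact mul_mul_exp_le_max (by positivity) hε0

/-- Perturbation lemma: adding small independent sub-Gaussian perturbations `ε g_v` to a
Gaussian field changes the upper tail of the maximum only by a shift `√ε` plus an error
exponentially small in `1/ε`. -/
theorem stmt9 {Ω : Type*} [MeasurableSpace Ω] (P : Measure Ω) [IsProbabilityMeasure P]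
    {V : Type*} [Fintype V] [Nonempty V]
    (X g : V → Ω → ℝ) (m : ℝ)
    (hX : IsCenteredGaussianField P X)
    (hgindep : iIndepFun g P)
    (hindep : IndepFun (fun ω => fun v => X v ω) (fun ω => fun v => g v ω) P)
    (hgtail : ∀ v, ∀ y : ℝ, 0 ≤ y → P {ω | 1 + y ≤ g v ω} ≤ ENNReal.ofReal (Real.exp (-y ^ 2)))
    (ctil c : ℝ) (hctil : 0 < ctil) (hc : 0 < c)
    (hmax : ∀ (Γ : Finset V) (s : ℝ),
      P {ω | ∃ v ∈ Γ, m + s ≤ X v ω}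
        ≤ ENNReal.ofReal (ctil * Real.exp (-c * s) * Γ.card / Fintype.card V)) :
    ∃ C : ℝ, 0 < C ∧ ∀ ε : ℝ, ε ∈ Set.Ioo (0:ℝ) 1 → ∀ x : ℝ, -Real.sqrt ε ≤ x →
      P {ω | ∃ v, m + x ≤ X v ω + ε * g v ω}
        ≤ P {ω | ∃ v, m + x - Real.sqrt ε ≤ X v ω}
          + ENNReal.ofReal (ctil * Real.exp (-c * x) * C * Real.exp (-1 / (C * ε))) :=
  stmt9_general P X g m hindep hgtail ctil c hctil hc hmax
end

section
/- Let (η_N) be a sequence of point processes on [0,1]² × ℝ such that for every y > 0, sup_N P(η_N([0,1]² × [−y,∞)) > e^{κy}) ≤ C e^{−y(κ−2)} for some κ > 2, C > 0, and such that any distributional limit η satisfies η([0,1]²×[0,∞)) < ∞ a.s. Then any subsequential limit η of (η_N) satisfies: the random measure Y in the Cox representation η = PPP(Y(dx) ⊗ β e^{−2h} dh) has Y([0,1]²) < ∞ almost surely. -/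
/-!
If the intensity `Y([0,1]²)` is infinite, the conditionally Poisson count above level `-y`
carries no mass on any finite value, so `P(Y([0,1]²) = ∞) ≤ P(η([0,1]² × [-y, ∞)) = ∞)`. The
level-set bound makes the right-hand side at most `C e^{-y(κ-2)}`, which vanishes as `y → ∞`.

The events involved need not be measurable: `P` acts on them as an outer measure and `∫⁻` as a
lower integral, so the Poisson weights are summed by superadditivity of the lower integral and
compared with `P` through a measurable minorant.
-/

open MeasureTheory ProbabilityTheory Filter Topology
open scoped ENNReal Nat

section LowerIntegral

variable {α : Type*} [MeasurableSpace α] (μ : Measure α)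

theorem tsum_lintegral_le {ι : Type*} [Countable ι] (f : ι → α → ℝ≥0∞) :
    ∑' i, ∫⁻ a, f i a ∂μ ≤ ∫⁻ a, ∑' i, f i a ∂μ := by
  choose g hg_meas hg_le hg_eq using fun i => exists_measurable_le_lintegral_eq μ (f i)
  calc ∑' i, ∫⁻ a, f i a ∂μ = ∑' i, ∫⁻ a, g i a ∂μ := tsum_congr hg_eq
    _ = ∫⁻ a, ∑' i, g i a ∂μ := (lintegral_tsum fun i => (hg_meas i).aemeasurable).symm
    _ ≤ ∫⁻ a, ∑' i, f i a ∂μ := lintegral_mono fun a => ENNReal.tsum_le_tsum fun i => hg_le i a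

theorem lintegral_add_measure_le_measure_univ {f : α → ℝ≥0∞} {s : Set α} (hf : f ≤ 1)
    (hfs : ∀ a ∈ s, f a = 0) : ∫⁻ a, f a ∂μ + μ s ≤ μ Set.univ := by
  obtain ⟨g, hg_meas, hg_le, hg_eq⟩ := exists_measurable_le_lintegral_eq μ f
  set t := g ⁻¹' {0}
  have ht : MeasurableSet t := hg_meas (measurableSet_singleton 0)
  have hst : s ⊆ t := fun a ha => nonpos_iff_eq_zero.1 ((hg_le a).trans_eq (hfs a ha))
  have hg_ind : g ≤ tᶜ.indicator 1 := fun a => by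
    by_cases ha : a ∈ t
    · simp [show g a = 0 from ha]
    · simpa [Set.indicator_of_mem (Set.mem_compl ha)] using (hg_le a).trans (hf a)
  calc ∫⁻ a, f a ∂μ + μ s ≤ μ tᶜ + μ t := by
        rw [hg_eq, ← lintegral_indicator_one ht.compl]
        exact add_le_add (lintegral_mono hg_ind) (measure_mono hst)
    _ = μ Set.univ := by rw [add_comm, measure_add_measure_compl ht]

end LowerIntegral

theorem ENNReal.tsum_ofReal_poisson {r : ℝ} (hr : 0 ≤ r) :
    ∑' k : ℕ, ENNReal.ofReal (Real.exp (-r) * r ^ k / k !) = 1 := by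
  have h := hasSum_one_poissonMeasure r.toNNReal
  rw [Real.coe_toNNReal r hr] at h
  rw [← ENNReal.ofReal_tsum_of_nonneg (fun k => by positivity) h.summable, h.tsum_eq,
    ENNReal.ofReal_one]

theorem measure_rate_eq_top_le_measure_count_eq_top {Ω : Type*} [MeasurableSpace Ω]
    (μ : Measure Ω) [IsProbabilityMeasure μ] (N Λ : Ω → ℝ≥0∞) {c : ℝ} (hc : 0 ≤ c)
    (hN : ∀ ω, N ω = ⊤ ∨ ∃ k : ℕ, N ω = k)
    (hlaw : ∀ k : ℕ, μ {ω | N ω = k} = ∫⁻ ω, (if Λ ω = ⊤ then 0 else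
      ENNReal.ofReal (Real.exp (-(c * (Λ ω).toReal)) * (c * (Λ ω).toReal) ^ k / k !)) ∂μ) :
    μ {ω | Λ ω = ⊤} ≤ μ {ω | N ω = ⊤} := by
  set h : Ω → ℝ≥0∞ := fun ω => if Λ ω = ⊤ then 0 else 1
  have hfinite : ∑' k : ℕ, μ {ω | N ω = k} ≤ ∫⁻ ω, h ω ∂μ := by
    rw [tsum_congr hlaw]
    refine (tsum_lintegral_le μ _).trans_eq (lintegral_congr fun ω => ?_)
    by_cases hΛ : Λ ω = ⊤
    · simp [h, hΛ]
    · simpa [h, hΛ] using ENNReal.tsum_ofReal_poisson (by positivity)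
  have hcover : 1 ≤ μ {ω | N ω = ⊤} + ∑' k : ℕ, μ {ω | N ω = k} :=
    calc 1 = μ Set.univ := measure_univ.symm
      _ ≤ μ ({ω | N ω = ⊤} ∪ ⋃ k : ℕ, {ω | N ω = k}) := measure_mono fun ω _ => by
          rcases hN ω with hω | ⟨k, hω⟩
          · exact Or.inl hω
          · exact Or.inr (Set.mem_iUnion.2 ⟨k, hω⟩)
      _ ≤ _ := (measure_union_le _ _).trans (add_le_add_right (measure_iUnion_le _) _)
  have hrate : ∫⁻ ω, h ω ∂μ + μ {ω | Λ ω = ⊤} ≤ 1 := by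
    refine (lintegral_add_measure_le_measure_univ μ (fun ω => ?_) fun ω hω => ?_).trans_eq
      measure_univ
    · by_cases hΛ : Λ ω = ⊤ <;> simp [h, hΛ]
    · simp [h, show Λ ω = ⊤ from hω]
  rw [← ENNReal.add_le_add_iff_right ENNReal.one_ne_top]
  calc μ {ω | Λ ω = ⊤} + 1 ≤ μ {ω | Λ ω = ⊤} + (μ {ω | N ω = ⊤} + ∫⁻ ω, h ω ∂μ) := by
        gcongr; exact hcover.trans (by gcongr)
    _ = μ {ω | N ω = ⊤} + (∫⁻ ω, h ω ∂μ + μ {ω | Λ ω = ⊤}) := by ring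
    _ ≤ μ {ω | N ω = ⊤} + 1 := by gcongr

theorem ENNReal.eq_zero_of_forall_le_ofReal_mul_exp_neg {a : ℝ≥0∞} {C b : ℝ} (hb : 0 < b)
    (ha : ∀ y : ℝ, 0 < y → a ≤ ENNReal.ofReal (C * Real.exp (-y * b))) : a = 0 := by
  have hexp : Tendsto (fun y : ℝ => -y * b) atTop atBot :=
    tendsto_neg_atTop_atBot.atBot_mul_const hb
  have hlim : Tendsto (fun y : ℝ => ENNReal.ofReal (C * Real.exp (-y * b))) atTop (𝓝 0) := by
    simpa using ENNReal.tendsto_ofReal ((Real.tendsto_exp_atBot.comp hexp).const_mul C)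
  exact nonpos_iff_eq_zero.1 (ge_of_tendsto hlim ((eventually_gt_atTop 0).mono ha))

theorem stmt16_general {Ω : Type*} [MeasurableSpace Ω] (P : Measure Ω) [IsProbabilityMeasure P]
    (η : Ω → Measure ((ℝ × ℝ) × ℝ)) (Y : Ω → Measure (ℝ × ℝ))
    (β C κ : ℝ) (hβ : 0 < β) (hκ : 2 < κ)
    (box : Set (ℝ × ℝ))
    (hpoint : ∀ ω s, η ω s = ⊤ ∨ ∃ k : ℕ, η ω s = k)
    (hlevel : ∀ y : ℝ, 0 < y →
      P {ω | ENNReal.ofReal (Real.exp (κ * y)) < η ω (box ×ˢ Set.Ici (-y))}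
        ≤ ENNReal.ofReal (C * Real.exp (-y * (κ - 2))))
    (hCox : ∀ y : ℝ, 0 < y → ∀ k : ℕ,
      P {ω | η ω (box ×ˢ Set.Ici (-y)) = k}
        = ∫⁻ ω, (if Y ω box = ⊤ then 0 else
            ENNReal.ofReal (Real.exp (-(β / 2 * Real.exp (2 * y) * (Y ω box).toReal))
              * (β / 2 * Real.exp (2 * y) * (Y ω box).toReal) ^ k / (Nat.factorial k))) ∂P) :
    ∀ᵐ ω ∂P, Y ω box < ⊤ := by
  have hbound : ∀ y : ℝ, 0 < y →
      P {ω | Y ω box = ⊤} ≤ ENNReal.ofReal (C * Real.exp (-y * (κ - 2))) := fun y hy =>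
    calc P {ω | Y ω box = ⊤} ≤ P {ω | η ω (box ×ˢ Set.Ici (-y)) = ⊤} :=
          measure_rate_eq_top_le_measure_count_eq_top P _ (fun ω => Y ω box) (by positivity)
            (fun ω => hpoint ω _) (hCox y hy)
      _ ≤ P {ω | ENNReal.ofReal (Real.exp (κ * y)) < η ω (box ×ˢ Set.Ici (-y))} :=
          measure_mono fun ω (hω : η ω _ = ⊤) => show _ < η ω _ from hω ▸ ENNReal.ofReal_lt_top
      _ ≤ _ := hlevel y hy
  simp only [ae_iff, not_lt, top_le_iff]
  exact ENNReal.eq_zero_of_forall_le_ofReal_mul_exp_neg (by linarith) hbound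

/-- Finiteness of the random intensity measure: if a point process `η` on `[0,1]² × ℝ`
satisfies the uniform exponential level-set bound with exponent `κ > 2` and is a Cox
process with intensity `Y(dx) ⊗ β e^{-2h} dh` (so that the number of points above level
`-y` is conditionally Poisson with mean `(β/2) e^{2y} Y([0,1]²)`), then
`Y([0,1]²) < ∞` almost surely. -/
theorem stmt16 {Ω : Type*} [MeasurableSpace Ω] (P : Measure Ω) [IsProbabilityMeasure P]
    (η : Ω → Measure ((ℝ × ℝ) × ℝ)) (Y : Ω → Measure (ℝ × ℝ))
    (β C κ : ℝ) (hβ : 0 < β) (hC : 0 < C) (hκ : 2 < κ)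
    (box : Set (ℝ × ℝ)) (hbox : box = Set.Icc (0:ℝ) 1 ×ˢ Set.Icc (0:ℝ) 1)
    (hpoint : ∀ ω s, η ω s = ⊤ ∨ ∃ k : ℕ, η ω s = k)
    (hlevel : ∀ y : ℝ, 0 < y →
      P {ω | ENNReal.ofReal (Real.exp (κ * y)) < η ω (box ×ˢ Set.Ici (-y))}
        ≤ ENNReal.ofReal (C * Real.exp (-y * (κ - 2))))
    (hCox : ∀ y : ℝ, 0 < y → ∀ k : ℕ,
      P {ω | η ω (box ×ˢ Set.Ici (-y)) = k}
        = ∫⁻ ω, (if Y ω box = ⊤ then 0 else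
            ENNReal.ofReal (Real.exp (-(β / 2 * Real.exp (2 * y) * (Y ω box).toReal))
              * (β / 2 * Real.exp (2 * y) * (Y ω box).toReal) ^ k / (Nat.factorial k))) ∂P) :
    ∀ᵐ ω ∂P, Y ω box < ⊤ :=
  stmt16_general P η Y β C κ hβ hκ box hpoint hlevel hCox
end
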